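/- Let a₁, ..., a_N ∈ (0,1) with S = ∑ a_i > 1 and a₁ = min a_i. Then 1 < log(S/a₁)/log(1/a₁) ≤ d_H, where d_H satisfies ∑ a_i^{d_H} = 1, with equality iff all a_i are equal. -/
import Mathlib

theorem stmt_15 (N : ℕ) (hN : 2 ≤ N) (a : Fin N → ℝ)
    (ha : ∀ i, 0 < a i ∧ a i < 1) (i₁ : Fin N) (hmin : ∀ i, a i₁ ≤ a i)
    (hS : 1 < ∑ i, a i) (dH : ℝ) (hd : 0 < dH)
    (hsum : ∑ i, a i ^ dH = 1) :
    1 < Real.log ((∑ i, a i) / a i₁) / Real.log (1 / a i₁) ∧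
      Real.log ((∑ i, a i) / a i₁) / Real.log (1 / a i₁) ≤ dH ∧
      (Real.log ((∑ i, a i) / a i₁) / Real.log (1 / a i₁) = dH ↔ ∀ i j, a i = a j) := by
  set S := ∑ i, a i with hSdef
  have hm0 : 0 < a i₁ := (ha i₁).1
  have hm1 : a i₁ < 1 := (ha i₁).2
  have hS0 : 0 < S := lt_trans one_pos hS
  have hlog1m : 0 < Real.log (1 / a i₁) := by
    rw [one_div, Real.log_inv]
    linarith [Real.log_neg hm0 hm1]
  -- dH > 1
  have hd1 : 1 < dH := by
    by_contra h
    push_neg at h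
    have : S ≤ ∑ i, a i ^ dH := by
      apply Finset.sum_le_sum
      intro i _
      calc a i = a i ^ (1:ℝ) := (Real.rpow_one _).symm
        _ ≤ a i ^ dH := Real.rpow_le_rpow_of_exponent_ge (ha i).1 (ha i).2.le h
    rw [hsum] at this
    linarith
  -- key pointwise inequality
  have hkey : ∀ i, a i ≤ a i ^ dH * a i₁ ^ (1 - dH) := by
    intro i
    have h1 : a i = a i ^ dH * a i ^ (1 - dH) := by
      rw [← Real.rpow_add (ha i).1]
      ring_nf
      rw [Real.rpow_one]
    calc a i = a i ^ dH * a i ^ (1 - dH) := h1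
      _ ≤ a i ^ dH * a i₁ ^ (1 - dH) :=
        mul_le_mul_of_nonneg_left
          (Real.rpow_le_rpow_of_nonpos hm0 (hmin i) (by linarith))
          (Real.rpow_nonneg (ha i).1.le _)
  have hSle : S ≤ a i₁ ^ (1 - dH) := by
    calc S ≤ ∑ i, a i ^ dH * a i₁ ^ (1 - dH) := Finset.sum_le_sum fun i _ => hkey i
      _ = (∑ i, a i ^ dH) * a i₁ ^ (1 - dH) := by rw [Finset.sum_mul]
      _ = a i₁ ^ (1 - dH) := by rw [hsum, one_mul]
  have hpow1m : (1 / a i₁ : ℝ) ^ dH = a i₁ ^ (1 - dH) / a i₁ := by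
    rw [one_div, Real.inv_rpow hm0.le, Real.rpow_sub hm0, Real.rpow_one]
    have hpos : (0:ℝ) < a i₁ ^ dH := Real.rpow_pos_of_pos hm0 _
    field_simp
  have hlogdH : dH * Real.log (1 / a i₁) = Real.log (a i₁ ^ (1 - dH) / a i₁) := by
    rw [← hpow1m, Real.log_rpow (by positivity)]
  -- part 1
  have h1 : 1 < Real.log (S / a i₁) / Real.log (1 / a i₁) := by
    rw [lt_div_iff₀ hlog1m, one_mul]
    apply Real.log_lt_log (by positivity)
    gcongr
  have h2 : Real.log (S / a i₁) / Real.log (1 / a i₁) ≤ dH := by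
    rw [div_le_iff₀ hlog1m, hlogdH]
    apply Real.log_le_log (by positivity)
    gcongr
  refine ⟨h1, h2, ?_⟩
  constructor
  · intro heq
    have hlogeq : Real.log (S / a i₁) = Real.log (a i₁ ^ (1 - dH) / a i₁) := by
      rw [← hlogdH]
      field_simp at heq ⊢
      linarith [heq]
    have hSeq : S = a i₁ ^ (1 - dH) := by
      have := Real.log_injOn_pos (Set.mem_Ioi.mpr (by positivity))
        (Set.mem_Ioi.mpr (by positivity)) hlogeq
      field_simp at this
      exact this
    -- each term equality
    have hzero : ∑ i, (a i ^ dH * a i₁ ^ (1 - dH) - a i) = 0 := by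
      rw [Finset.sum_sub_distrib, ← Finset.sum_mul, hsum, one_mul, ← hSdef, hSeq, sub_self]
    have heach := (Finset.sum_eq_zero_iff_of_nonneg
      (fun i _ => by linarith [hkey i])).mp hzero
    intro i j
    have hia : ∀ k, a k = a i₁ := by
      intro k
      have hk := heach k (Finset.mem_univ k)
      have h1 : a k = a k ^ dH * a k ^ (1 - dH) := by
        rw [← Real.rpow_add (ha k).1]
        ring_nf
        rw [Real.rpow_one]
      have hpos : (0:ℝ) < a k ^ dH := Real.rpow_pos_of_pos (ha k).1 _
      have h2 : a k ^ dH * a i₁ ^ (1 - dH) = a k ^ dH * a k ^ (1 - dH) := by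
        rw [← h1]; linarith
      have h3 : a i₁ ^ (1 - dH) = a k ^ (1 - dH) := mul_left_cancel₀ hpos.ne' h2
      have h4 : (1 - dH) * Real.log (a i₁) = (1 - dH) * Real.log (a k) := by
        have := congrArg Real.log h3
        rwa [Real.log_rpow hm0, Real.log_rpow (ha k).1] at this
      have h5 : Real.log (a i₁) = Real.log (a k) :=
        mul_left_cancel₀ (by linarith : (1:ℝ) - dH ≠ 0) h4
      exact (Real.log_injOn_pos (Set.mem_Ioi.mpr (ha k).1)
        (Set.mem_Ioi.mpr hm0) h5.symm)
    rw [hia i, hia j]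
  · intro hall
    have hia : ∀ k, a k = a i₁ := fun k => hall k i₁
    have hSN : S = N * a i₁ := by
      rw [hSdef]
      rw [Finset.sum_congr rfl (fun k _ => hia k)]
      simp [Finset.card_univ, mul_comm]
    have hsumN : (N : ℝ) * a i₁ ^ dH = 1 := by
      rw [← hsum, Finset.sum_congr rfl (fun k _ => by rw [hia k])]
      simp [Finset.card_univ, mul_comm]
    have hNval : (N : ℝ) = a i₁ ^ (-dH) := by
      have hpos : (0:ℝ) < a i₁ ^ dH := Real.rpow_pos_of_pos hm0 _
      rw [Real.rpow_neg hm0.le]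
      field_simp
      linarith [hsumN]
    have : S / a i₁ = (1 / a i₁) ^ dH := by
      rw [hSN, hNval, hpow1m, Real.rpow_sub hm0, Real.rpow_one, Real.rpow_neg hm0.le]
      field_simp
    rw [this, Real.log_rpow (by positivity), mul_div_assoc, div_self hlog1m.ne', mul_one]
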